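/- arXiv:2404.01180 — 3 statements merged into one kernel-verified Lean document; each statement's English description precedes it below -/
import Mathlib

section
/- Let k be an algebraically closed field of characteristic p > 0, let M be an abelian group, and let M' ⊆ M be a subgroup such that the quotient M/M' is a torsion p-group (every element has order a power of p). Then the restriction map Hom(M, kˣ) → Hom(M', kˣ), φ ↦ φ|_{M'}, is a group isomorphism. -/
/-!
Restriction is injective because `M/M'` is `p`-primary and `u ↦ u ^ p ^ n` is injective on `kˣ`
(Frobenius is injective on a reduced ring of exponential characteristic `p`). It is surjective
because `kˣ` is divisible (every `n`-th root exists in `k`), hence an injective `ℤ`-module by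
Baer's criterion, so every homomorphism `M' → kˣ` extends to `M`.
-/

theorem Units.pow_expChar_pow_injective (R : Type*) [CommRing R] [IsReduced R] (p : ℕ)
    [ExpChar R p] (n : ℕ) : Function.Injective fun u : Rˣ => u ^ p ^ n := fun a b hab =>
  Units.ext <| iterateFrobenius_inj R p n <| by
    simpa only [iterateFrobenius_def, Units.val_pow_eq_pow_val] using congrArg Units.val hab

theorem IsAlgClosed.units_pow_surjective (k : Type*) [Field k] [IsAlgClosed k] {n : ℕ}
    (hn : n ≠ 0) : Function.Surjective fun u : kˣ => u ^ n := fun u => by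
  obtain ⟨z, hz⟩ := IsAlgClosed.exists_pow_nat_eq (u : k) (Nat.pos_of_ne_zero hn)
  have hz0 : z ≠ 0 := by
    rintro rfl
    exact u.ne_zero (by rw [← hz, zero_pow hn])
  exact ⟨Units.mk0 z hz0, Units.ext (by simpa using hz)⟩

namespace MonoidHom

theorem comp_subtype_injective_of_pow_mem {M G : Type*} [Group M] [Monoid G]
    {M' : Subgroup M} {p : ℕ} (hM : ∀ x : M, ∃ n, x ^ p ^ n ∈ M')
    (hG : ∀ n, Function.Injective fun g : G => g ^ p ^ n) :
    Function.Injective fun φ : M →* G => φ.comp M'.subtype := by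
  intro φ ψ h
  ext x
  obtain ⟨n, hn⟩ := hM x
  apply hG n
  simp only [← map_pow]
  exact DFunLike.congr_fun h ⟨_, hn⟩

theorem exists_comp_subtype_eq_of_pow_surjective {M G : Type*} [CommGroup M] [CommGroup G]
    (hG : ∀ n : ℕ, n ≠ 0 → Function.Surjective fun g : G => g ^ n) {M' : Subgroup M}
    (f : M' →* G) : ∃ φ : M →* G, φ.comp M'.subtype = f := by
  let _ : DivisibleBy (Additive G) ℕ := divisibleByOfSMulRightSurj _ _ fun {n} => hG n
  let _ : DivisibleBy (Additive G) ℤ := AddGroup.divisibleByIntOfDivisibleByNat _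
  obtain ⟨h, hh⟩ := (Module.Baer.of_divisible (Additive G)).extension_property_addMonoidHom
    (toAdditive M'.subtype) Subtype.val_injective (toAdditive f)
  exact ⟨toAdditive.symm h, toAdditive.injective hh⟩

end MonoidHom

/-- Let `k` be an algebraically closed field of characteristic `p > 0`, let `M` be an
abelian group, and let `M' ⊆ M` be a subgroup such that the quotient `M/M'` is a
torsion `p`-group (every element has order a power of `p`). Then the restriction map
`Hom(M, kˣ) → Hom(M', kˣ)`, `φ ↦ φ|_{M'}`, is a group isomorphism (it is a group
homomorphism, and it is bijective). -/
theorem restriction_of_homs_to_units_bijective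
    (k : Type*) [Field k] [IsAlgClosed k] (p : ℕ) [CharP k p] (hp : 0 < p)
    (M : Type*) [CommGroup M] (M' : Subgroup M)
    (hq : ∀ x : M ⧸ M', ∃ n : ℕ, orderOf x = p ^ n) :
    ∃ res : (M →* kˣ) →* (M' →* kˣ),
      (∀ φ : M →* kˣ, res φ = φ.comp M'.subtype) ∧ Function.Bijective res := by
  have : NeZero p := ⟨hp.ne'⟩
  have := CharP.char_is_prime_of_pos k p
  have hM : ∀ x : M, ∃ n, x ^ p ^ n ∈ M' := fun x => by
    obtain ⟨n, hn⟩ := hq x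
    refine ⟨n, (QuotientGroup.eq_one_iff _).mp ?_⟩
    rw [QuotientGroup.mk_pow, ← hn, pow_orderOf_eq_one]
  refine ⟨MonoidHom.compHom' M'.subtype, fun _ => rfl, ?_, fun f => ?_⟩
  · exact MonoidHom.comp_subtype_injective_of_pow_mem hM
      (Units.pow_expChar_pow_injective k p)
  · exact MonoidHom.exists_comp_subtype_eq_of_pow_surjective
      (fun _ => IsAlgClosed.units_pow_surjective k) f
end

section
/- Let k be an algebraically closed field, let Λ be a free abelian group of finite rank, and let E be a finite subgroup of Hom(Λ, kˣ). Define Λ₀ = {χ ∈ Λ : φ(χ) = 1 for all φ ∈ E}. Then a homomorphism ψ ∈ Hom(Λ, kˣ) satisfies ψ(χ) = 1 for all χ ∈ Λ₀ if and only if ψ ∈ E; that is, the kernel of the restriction map Hom(Λ, kˣ) → Hom(Λ₀, kˣ) is exactly E. -/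
/-!
The evaluation pairing gives a homomorphism `ev : Λ → Hom(E, kˣ)` with kernel `Λ₀`. A character
`ψ` trivial on `Λ₀` therefore factors through the image of `ev`; since `E` is finite and its
exponent is invertible in `k` (the multiplicative group of a field of characteristic `p` has no
`p`-torsion), `k` has enough roots of unity to extend this character to all of `Hom(E, kˣ)`, and by
double duality the extension is evaluation at some `φ ∈ E`. Then `ψ = φ`.
-/

theorem Subgroup.natCast_exponent_ne_zero {G K : Type*} [MulOneClass G] [CommRing K] [IsDomain K]
    (E : Subgroup (G →* Kˣ)) [Finite E] : (Monoid.exponent E : K) ≠ 0 := by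
  intro h
  set p := ringChar K
  set n := Monoid.exponent E
  have hn : n ≠ 0 := Monoid.exponent_ne_zero_of_finite
  have hdvd : p ∣ n := ringChar.dvd h
  have hp : p.Prime :=
    (CharP.char_is_prime_or_zero K _).resolve_right fun h0 ↦ hn (zero_dvd_iff.mp (h0 ▸ hdvd))
  have : ExpChar K p := .prime hp
  obtain ⟨m, hm⟩ := hdvd
  have hpow (u : Kˣ) (hu : u ^ n = 1) : u ^ m = 1 := by
    rw [← mem_rootsOfUnity, ← mem_rootsOfUnity_prime_pow_mul_iff K p 1, pow_one, ← hm]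
    exact hu
  have hnm : n ∣ m := Monoid.exponent_dvd_of_forall_pow_eq_one fun φ ↦ Subtype.ext <|
    MonoidHom.ext fun g ↦ hpow _ congr($(Monoid.pow_exponent_eq_one φ).1 g)
  have hm0 : m ≠ 0 := by rintro rfl; exact hn hm
  have := Nat.le_of_dvd (Nat.pos_of_ne_zero hm0) hnm
  nlinarith [hp.two_le, Nat.pos_of_ne_zero hm0]

open MonoidHom in
theorem CommGroup.forall_apply_eq_one_iff_mem {G M : Type*} [Group G] [CommMonoid M]
    (E : Subgroup (G →* Mˣ)) [Finite E] [HasEnoughRootsOfUnity M (Monoid.exponent E)]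
    (ψ : G →* Mˣ) : (∀ g, (∀ φ ∈ E, φ g = 1) → ψ g = 1) ↔ ψ ∈ E := by
  refine ⟨fun hψ ↦ ?_, fun hψ g hg ↦ hg ψ hψ⟩
  let ev : G →* (E →* Mˣ) := (compHom' E.subtype).comp eval
  have : HasEnoughRootsOfUnity M (Monoid.exponent (E →* Mˣ)) := by
    rwa [Monoid.exponent_eq_of_mulEquiv (monoidHom_mulEquiv_of_hasEnoughRootsOfUnity E M).some]
  have hker : ev.rangeRestrict.ker ≤ ψ.ker := fun g hg ↦ by
    rw [ker_rangeRestrict] at hg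
    exact hψ g fun φ hφ ↦ congr($hg ⟨φ, hφ⟩)
  obtain ⟨f, hf⟩ := domRestrict_surjective (M := M) ev.range
    (ev.rangeRestrict.liftOfSurjective ev.rangeRestrict_surjective ⟨ψ, hker⟩)
  convert (monoidHomMonoidHomEquiv E M f).2 using 1
  ext1 g
  calc ψ g = f (ev g) := by simpa using congr($hf (ev.rangeRestrict g)).symm
    _ = ev g (monoidHomMonoidHomEquiv E M f) := (apply_monoidHomMonoidHomEquiv ..).symm

theorem ker_restriction_to_annihilator_eq_subgroup_general
    (k : Type*) [Field k] [IsAlgClosed k]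
    (Λ : Type*) [AddCommGroup Λ]
    (E : AddSubgroup (Λ →+ Additive kˣ)) (hE : Finite E) :
    ∀ ψ : Λ →+ Additive kˣ,
      (∀ χ : Λ, (∀ φ ∈ E, φ χ = 0) → ψ χ = 0) ↔ ψ ∈ E := by
  intro ψ
  let e := MonoidHom.toAdditiveRightMulEquiv (M := Λ) (N := kˣ)
  have he (φ : Λ →+ Additive kˣ) : e.symm (.ofAdd φ) = φ.toMultiplicativeLeft := rfl
  let E' : Subgroup (Multiplicative Λ →* kˣ) := (AddSubgroup.toSubgroup E).map e.symm.toMonoidHom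
  have : Finite (AddSubgroup.toSubgroup E) := hE
  have : Finite E' :=
    .of_equiv _ ((AddSubgroup.toSubgroup E).equivMapOfInjective _ e.symm.injective).toEquiv
  have : NeZero (Monoid.exponent E' : k) := ⟨E'.natCast_exponent_ne_zero⟩
  simpa [E', he, AddMonoidHom.coe_toMultiplicativeLeft] using
    CommGroup.forall_apply_eq_one_iff_mem E' ψ.toMultiplicativeLeft

/-- Let `k` be an algebraically closed field, let `Λ` be a free abelian group of
finite rank, and let `E` be a finite subgroup of `Hom(Λ, kˣ)` (written additively,
via `Additive kˣ`). With `Λ₀ = {χ ∈ Λ : φ(χ) = 1 for all φ ∈ E}`, a homomorphism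
`ψ ∈ Hom(Λ, kˣ)` restricts trivially to `Λ₀` if and only if `ψ ∈ E`; that is, the
kernel of the restriction map `Hom(Λ, kˣ) → Hom(Λ₀, kˣ)` is exactly `E`. -/
theorem ker_restriction_to_annihilator_eq_subgroup
    (k : Type*) [Field k] [IsAlgClosed k]
    (Λ : Type*) [AddCommGroup Λ] [Module.Free ℤ Λ] [Module.Finite ℤ Λ]
    (E : AddSubgroup (Λ →+ Additive kˣ)) (hE : Finite E) :
    ∀ ψ : Λ →+ Additive kˣ,
      (∀ χ : Λ, (∀ φ ∈ E, φ χ = 0) → ψ χ = 0) ↔ ψ ∈ E :=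
  ker_restriction_to_annihilator_eq_subgroup_general k Λ E hE
end

section
/- Let R be a commutative ring, let d be a positive integer that is invertible in R, and let u ∈ Rˣ be a unit of R. Then the R-algebra R[X]/(X^d − u) is étale over R (i.e. it is formally étale and of finite presentation). -/
open Polynomial

/-- Separability is a Bézout relation `b * f' + a * f = 1`, so `(f, 1)` is a standard étale pair,
whose algebra is `R[X]/(f)` localized at `1`. -/
theorem AdjoinRoot.etale_of_separable {R : Type*} [CommRing R] {f : R[X]} (hm : f.Monic)
    (hs : f.Separable) : Algebra.Etale R (AdjoinRoot f) := by
  obtain ⟨a, b, hab⟩ := hs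
  let P : StandardEtalePair R := ⟨f, hm, 1, b, a, 0, by linear_combination hab⟩
  have hunit : Submonoid.powers (AdjoinRoot.mk P.f P.g) ≤ IsUnit.submonoid (AdjoinRoot f) := by
    simp [P]
  exact .of_equiv <| P.equivAwayAdjoinRoot.trans
    ((IsLocalization.atUnits (AdjoinRoot f) _ hunit).symm.restrictScalars R)

open Polynomial in
/-- Let `R` be a commutative ring, let `d` be a positive integer that is invertible
in `R`, and let `u ∈ Rˣ` be a unit. Then the `R`-algebra `R[X]/(X^d − u)` is étale
over `R` (formally étale and of finite presentation). -/
theorem quotient_pow_sub_unit_etale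
    (R : Type*) [CommRing R] (d : ℕ) (hd : 0 < d) (hdR : IsUnit (d : R)) (u : Rˣ) :
    Algebra.Etale R (R[X] ⧸ Ideal.span {X ^ d - C (u : R)}) :=
  AdjoinRoot.etale_of_separable (monic_X_pow_sub_C _ hd.ne') (separable_X_pow_sub_C_unit u hdR)
end
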